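/- Let V ⊆ ℝ² be a domain and φ̄, P̄, κ̄₃ smooth functions on V with sin φ̄ · cos φ̄ ≠ 0 everywhere. Set e^{−P̄} := exp(−P̄), κ̄₁ := e^{−P̄} tan φ̄ + κ̄₃ and κ̄₂ := −e^{−P̄} cot φ̄ + κ̄₃, assume κ̄₁ κ̄₂ ≠ 0 everywhere, and assume (κ̄₃)_x = −(e^{−P̄})_x tan φ̄ and (κ̄₃)_y = (e^{−P̄})_y cot φ̄ on V. Let A := κ̄₁ e^{P̄} cos φ̄, B := κ̄₂ e^{P̄} sin φ̄, and let K := −(1/(AB))·[(B_x/A)_x + (A_y/B)_y] be the Gauss curvature of the orthogonal metric A² dx² + B² dy². Then on V: κ̄₁ κ̄₂ · K = (e^{−P̄}/cos²φ̄)·((e^{−P̄})_{xx} + (φ̄_x/(sin φ̄ cos φ̄))(e^{−P̄})_x) + (e^{−P̄}/sin²φ̄)·((e^{−P̄})_{yy} − (φ̄_y/(sin φ̄ cos φ̄))(e^{−P̄})_y) − ((e^{−P̄})_x)²/cos²φ̄ − ((e^{−P̄})_y)²/sin²φ̄ − (e^{−2P̄}/(sin φ̄ cos φ̄))·(φ̄_{xx}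 − φ̄_{yy}). (Lemma 4.4: the right-hand side is the Gauss curvature of the metric e^{2P̄}(cos²φ̄ dx² + sin²φ̄ dy²).) -/

import Mathlib

noncomputable section

open Real
open scoped RealInnerProductSpace

/-- Partial derivative in the `x`-direction of a map on `ℝ² = ℝ × ℝ`. -/
def qx {E : Type*} [NormedAddCommGroup E] [NormedSpace ℝ E]
    (f : ℝ × ℝ → E) : ℝ × ℝ → E := fun q => fderiv ℝ f q (1, 0)

/-- Partial derivative in the `y`-direction of a map on `ℝ² = ℝ × ℝ`. -/
def qy {E : Type*} [NormedAddCommGroup E] [NormedSpace ℝ E]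
    (f : ℝ × ℝ → E) : ℝ × ℝ → E := fun q => fderiv ℝ f q (0, 1)

/-- `e^{−P̄}` on `V`. -/
def Ebar (Pb : ℝ × ℝ → ℝ) : ℝ × ℝ → ℝ := fun q => exp (-(Pb q))

section Helpers
variable {f g : ℝ × ℝ → ℝ} {q v : ℝ × ℝ}

lemma fdv_add (hf : DifferentiableAt ℝ f q) (hg : DifferentiableAt ℝ g q) :
    fderiv ℝ (fun p => f p + g p) q v = fderiv ℝ f q v + fderiv ℝ g q v := by
  rw [fderiv_fun_add hf hg]; rfl

lemma fdv_neg : fderiv ℝ (fun p => -f p) q v = -(fderiv ℝ f q v) := by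
  rw [fderiv_fun_neg]; rfl

lemma fdv_sub (hf : DifferentiableAt ℝ f q) (hg : DifferentiableAt ℝ g q) :
    fderiv ℝ (fun p => f p - g p) q v = fderiv ℝ f q v - fderiv ℝ g q v := by
  rw [fderiv_fun_sub hf hg]; rfl

lemma fdv_mul (hf : DifferentiableAt ℝ f q) (hg : DifferentiableAt ℝ g q) :
    fderiv ℝ (fun p => f p * g p) q v = fderiv ℝ f q v * g q + f q * fderiv ℝ g q v := by
  rw [fderiv_fun_mul hf hg]
  simp [smul_eq_mul]
  ring

lemma fdv_comp {h : ℝ → ℝ} {h' : ℝ} (hh : HasDerivAt h h' (f q)) (hf : DifferentiableAt ℝ f q) :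
    fderiv ℝ (fun p => h (f p)) q v = h' * fderiv ℝ f q v := by
  have h2 := (HasDerivAt.comp_hasFDerivAt q hh hf.hasFDerivAt).fderiv
  have h3 : (fun p => h (f p)) = h ∘ f := rfl
  rw [h3, h2]
  simp

lemma fdv_inv (hf : DifferentiableAt ℝ f q) (h0 : f q ≠ 0) :
    fderiv ℝ (fun p => (f p)⁻¹) q v = -(fderiv ℝ f q v) / (f q) ^ 2 := by
  rw [fdv_comp (hasDerivAt_inv h0) hf]
  field_simp

lemma fdv_sin (hf : DifferentiableAt ℝ f q) :
    fderiv ℝ (fun p => sin (f p)) q v = cos (f q) * fderiv ℝ f q v :=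
  fdv_comp (hasDerivAt_sin _) hf

lemma fdv_cos (hf : DifferentiableAt ℝ f q) :
    fderiv ℝ (fun p => cos (f p)) q v = -sin (f q) * fderiv ℝ f q v :=
  fdv_comp (hasDerivAt_cos _) hf

lemma fdv_div (hf : DifferentiableAt ℝ f q) (hg : DifferentiableAt ℝ g q) (h0 : g q ≠ 0) :
    fderiv ℝ (fun p => f p / g p) q v =
      (fderiv ℝ f q v * g q - f q * fderiv ℝ g q v) / (g q) ^ 2 := by
  have h3 : (fun p => f p / g p) = fun p => f p * (g p)⁻¹ := by
    funext p; rw [div_eq_mul_inv]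
  rw [h3, fdv_mul (g := fun p => (g p)⁻¹) hf (hg.inv h0), fdv_inv hg h0]
  field_simp
  ring

lemma diffAt_pd {V : Set (ℝ × ℝ)} (hV : IsOpen V) (hf : ContDiffOn ℝ (⊤ : ℕ∞) f V)
    {q : ℝ × ℝ} (hq : q ∈ V) (v : ℝ × ℝ) :
    DifferentiableAt ℝ (fun p => fderiv ℝ f p v) q := by
  have h1 : ContDiffAt ℝ (⊤ : ℕ∞) f q := hf.contDiffAt (hV.mem_nhds hq)
  have h2 : ContDiffAt ℝ (⊤ : ℕ∞) (fderiv ℝ f) q := h1.fderiv_right (by simp)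
  exact (h2.clm_apply contDiffAt_const).differentiableAt (by simp)

lemma diffAt_div (hf : DifferentiableAt ℝ f q) (hg : DifferentiableAt ℝ g q)
    (h0 : g q ≠ 0) : DifferentiableAt ℝ (fun p => f p / g p) q := by
  simp only [div_eq_mul_inv]
  exact hf.mul (hg.inv h0)

end Helpers

set_option maxHeartbeats 1000000 in
/-- Lemma 4.4. -/
theorem stmt_14 (V : Set (ℝ × ℝ)) (hVopen : IsOpen V) (hVconn : IsConnected V)
    (φb Pb k3b : ℝ × ℝ → ℝ)
    (hφb : ContDiffOn ℝ (⊤ : ℕ∞) φb V) (hPb : ContDiffOn ℝ (⊤ : ℕ∞) Pb V) (hk3b : ContDiffOn ℝ (⊤ : ℕ∞) k3b V)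
    (hreg : ∀ q ∈ V, sin (φb q) * cos (φb q) ≠ 0)
    (k1b k2b : ℝ × ℝ → ℝ)
    (hk1b : k1b = fun q => Ebar Pb q * tan (φb q) + k3b q)
    (hk2b : k2b = fun q => -(Ebar Pb q * cot (φb q)) + k3b q)
    (hk12 : ∀ q ∈ V, k1b q * k2b q ≠ 0)
    (hk3x : ∀ q ∈ V, qx k3b q = -(qx (Ebar Pb) q * tan (φb q)))
    (hk3y : ∀ q ∈ V, qy k3b q = qy (Ebar Pb) q * cot (φb q))
    (A B K : ℝ × ℝ → ℝ)
    (hA : A = fun q => k1b q * exp (Pb q) * cos (φb q))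
    (hB : B = fun q => k2b q * exp (Pb q) * sin (φb q))
    (hK : K = fun q =>
      -(1 / (A q * B q)) *
        (qx (fun q' => qx B q' / A q') q + qy (fun q' => qy A q' / B q') q)) :
    ∀ q ∈ V,
      k1b q * k2b q * K q =
        (Ebar Pb q / cos (φb q) ^ 2) *
            (qx (qx (Ebar Pb)) q
              + (qx φb q / (sin (φb q) * cos (φb q))) * qx (Ebar Pb) q)
        + (Ebar Pb q / sin (φb q) ^ 2) *
            (qy (qy (Ebar Pb)) q
              - (qy φb q / (sin (φb q) * cos (φb q))) * qy (Ebar Pb) q)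
        - (qx (Ebar Pb) q) ^ 2 / cos (φb q) ^ 2
        - (qy (Ebar Pb) q) ^ 2 / sin (φb q) ^ 2
        - (Ebar Pb q ^ 2 / (sin (φb q) * cos (φb q)))
            * (qx (qx φb) q - qy (qy φb) q) := by
  -- smoothness of E := Ebar Pb
  have hE : ContDiffOn ℝ (⊤ : ℕ∞) (Ebar Pb) V := by
    unfold Ebar
    exact hPb.neg.exp
  -- basic pointwise facts
  have hs0 : ∀ p ∈ V, sin (φb p) ≠ 0 := fun p hp => (mul_ne_zero_iff.mp (hreg p hp)).1
  have hc0 : ∀ p ∈ V, cos (φb p) ≠ 0 := fun p hp => (mul_ne_zero_iff.mp (hreg p hp)).2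
  have he0 : ∀ p : ℝ × ℝ, Ebar Pb p ≠ 0 := fun p => (exp_pos _).ne'
  have dφ : ∀ p ∈ V, DifferentiableAt ℝ φb p :=
    fun p hp => (hφb.contDiffAt (hVopen.mem_nhds hp)).differentiableAt (by simp)
  have dE : ∀ p ∈ V, DifferentiableAt ℝ (Ebar Pb) p :=
    fun p hp => (hE.contDiffAt (hVopen.mem_nhds hp)).differentiableAt (by simp)
  have dk3 : ∀ p ∈ V, DifferentiableAt ℝ k3b p :=
    fun p hp => (hk3b.contDiffAt (hVopen.mem_nhds hp)).differentiableAt (by simp)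
  -- rewritten forms of A and B
  have hexpP : ∀ p : ℝ × ℝ, exp (Pb p) = (Ebar Pb p)⁻¹ := by
    intro p; simp [Ebar, Real.exp_neg]
  have hA' : A = fun p => (Ebar Pb p * (sin (φb p) / cos (φb p)) + k3b p) * (Ebar Pb p)⁻¹
      * cos (φb p) := by
    funext p; rw [hA, hk1b]; simp only [tan_eq_sin_div_cos, hexpP]
  have hB' : B = fun p => (-(Ebar Pb p * (cos (φb p) / sin (φb p))) + k3b p) * (Ebar Pb p)⁻¹
      * sin (φb p) := by
    funext p; rw [hB, hk2b]; simp only [cot_eq_cos_div_sin, hexpP]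
  -- derivative of cos φ / sin φ and sin φ / cos φ
  have hq_cs : ∀ v : ℝ × ℝ, ∀ p ∈ V,
      fderiv ℝ (fun r => cos (φb r) / sin (φb r)) p v = -(fderiv ℝ φb p v) / sin (φb p) ^ 2 := by
    intro v p hp
    have dcos : DifferentiableAt ℝ (fun r => cos (φb r)) p := (dφ p hp).cos
    have dsin : DifferentiableAt ℝ (fun r => sin (φb r)) p := (dφ p hp).sin
    have s0 := hs0 p hp
    rw [fdv_div dcos dsin (hs0 p hp), fdv_cos (dφ p hp), fdv_sin (dφ p hp)]
    have pyth := sin_sq_add_cos_sq (φb p)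
    field_simp
    linear_combination (-(fderiv ℝ φb p v)) * pyth
  have hq_sc : ∀ v : ℝ × ℝ, ∀ p ∈ V,
      fderiv ℝ (fun r => sin (φb r) / cos (φb r)) p v = fderiv ℝ φb p v / cos (φb p) ^ 2 := by
    intro v p hp
    have dcos : DifferentiableAt ℝ (fun r => cos (φb r)) p := (dφ p hp).cos
    have dsin : DifferentiableAt ℝ (fun r => sin (φb r)) p := (dφ p hp).sin
    have c0 := hc0 p hp
    rw [fdv_div dsin dcos (hc0 p hp), fdv_sin (dφ p hp), fdv_cos (dφ p hp)]
    have pyth := sin_sq_add_cos_sq (φb p)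
    field_simp
    linear_combination (fderiv ℝ φb p v) * pyth
  -- nonvanishing of the rewritten k1, k2 forms
  have hk1ne : ∀ p ∈ V, Ebar Pb p * (sin (φb p) / cos (φb p)) + k3b p ≠ 0 := by
    intro p hp
    have h := (mul_ne_zero_iff.mp (hk12 p hp)).1
    rw [hk1b] at h
    simpa [tan_eq_sin_div_cos] using h
  have hk2ne : ∀ p ∈ V, -(Ebar Pb p * (cos (φb p) / sin (φb p))) + k3b p ≠ 0 := by
    intro p hp
    have h := (mul_ne_zero_iff.mp (hk12 p hp)).2
    rw [hk2b] at h
    simpa [cot_eq_cos_div_sin] using h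
  have hA0 : ∀ p ∈ V, A p ≠ 0 := by
    intro p hp
    rw [hA]
    exact mul_ne_zero (mul_ne_zero (mul_ne_zero_iff.mp (hk12 p hp)).1 (exp_ne_zero _)) (hc0 p hp)
  have hB0 : ∀ p ∈ V, B p ≠ 0 := by
    intro p hp
    rw [hB]
    exact mul_ne_zero (mul_ne_zero (mul_ne_zero_iff.mp (hk12 p hp)).2 (exp_ne_zero _)) (hs0 p hp)
  -- Step 1 (x-direction): B_x / A on V
  have hBx : ∀ p ∈ V, qx B p / A p
      = qx φb p - qx (Ebar Pb) p / Ebar Pb p * (sin (φb p) / cos (φb p)) := by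
    intro p hp
    have hk3xp : fderiv ℝ k3b p (1, 0)
        = -(fderiv ℝ (Ebar Pb) p (1, 0) * (sin (φb p) / cos (φb p))) := by
      have := hk3x p hp
      rw [tan_eq_sin_div_cos] at this
      exact this
    rw [hB']
    simp only [qx]
    rw [div_eq_iff (hA0 p hp)]
    have dcos : DifferentiableAt ℝ (fun r => cos (φb r)) p := (dφ p hp).cos
    have dsin : DifferentiableAt ℝ (fun r => sin (φb r)) p := (dφ p hp).sin
    have dq : DifferentiableAt ℝ (fun r => cos (φb r) / sin (φb r)) p :=
      diffAt_div dcos dsin (hs0 p hp)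
    have dm : DifferentiableAt ℝ (fun r => Ebar Pb r * (cos (φb r) / sin (φb r))) p :=
      (dE p hp).mul dq
    have du : DifferentiableAt ℝ
        (fun r => -(Ebar Pb r * (cos (φb r) / sin (φb r))) + k3b r) p := dm.neg.add (dk3 p hp)
    have dinv : DifferentiableAt ℝ (fun r => (Ebar Pb r)⁻¹) p := (dE p hp).inv (he0 p)
    have dui : DifferentiableAt ℝ
        (fun r => (-(Ebar Pb r * (cos (φb r) / sin (φb r))) + k3b r) * (Ebar Pb r)⁻¹) p :=
      du.mul dinv
    rw [fdv_mul dui ((dφ p hp).sin), fdv_mul du dinv, fdv_add dm.fun_neg (dk3 p hp), fdv_neg,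
      fdv_mul (dE p hp) dq, hq_cs (1, 0) p hp, fdv_inv (dE p hp) (he0 p), fdv_sin (dφ p hp),
      hk3xp]
    rw [show A p = (Ebar Pb p * (sin (φb p) / cos (φb p)) + k3b p) * (Ebar Pb p)⁻¹ * cos (φb p)
      from by rw [hA']]
    have s0 := hs0 p hp
    have c0 := hc0 p hp
    have e0 := he0 p
    have pyth := sin_sq_add_cos_sq (φb p)
    field_simp
    linear_combination (-(Ebar Pb p ^ 2 * cos (φb p) * fderiv ℝ φb p (1, 0))) * pyth
  -- Step 1 (y-direction): A_y / B on V
  have hAy : ∀ p ∈ V, qy A p / B p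
      = -(qy φb p) - qy (Ebar Pb) p / Ebar Pb p * (cos (φb p) / sin (φb p)) := by
    intro p hp
    have hk3yp : fderiv ℝ k3b p (0, 1)
        = fderiv ℝ (Ebar Pb) p (0, 1) * (cos (φb p) / sin (φb p)) := by
      have := hk3y p hp
      rw [cot_eq_cos_div_sin] at this
      exact this
    rw [hA']
    simp only [qy]
    rw [div_eq_iff (hB0 p hp)]
    have dcos : DifferentiableAt ℝ (fun r => cos (φb r)) p := (dφ p hp).cos
    have dsin : DifferentiableAt ℝ (fun r => sin (φb r)) p := (dφ p hp).sin
    have dq : DifferentiableAt ℝ (fun r => sin (φb r) / cos (φb r)) p :=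
      diffAt_div dsin dcos (hc0 p hp)
    have dm : DifferentiableAt ℝ (fun r => Ebar Pb r * (sin (φb r) / cos (φb r))) p :=
      (dE p hp).mul dq
    have du : DifferentiableAt ℝ
        (fun r => Ebar Pb r * (sin (φb r) / cos (φb r)) + k3b r) p := dm.add (dk3 p hp)
    have dinv : DifferentiableAt ℝ (fun r => (Ebar Pb r)⁻¹) p := (dE p hp).inv (he0 p)
    have dui : DifferentiableAt ℝ
        (fun r => (Ebar Pb r * (sin (φb r) / cos (φb r)) + k3b r) * (Ebar Pb r)⁻¹) p :=
      du.mul dinv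
    rw [fdv_mul dui ((dφ p hp).cos), fdv_mul du dinv, fdv_add dm (dk3 p hp),
      fdv_mul (dE p hp) dq, hq_sc (0, 1) p hp, fdv_inv (dE p hp) (he0 p), fdv_cos (dφ p hp),
      hk3yp]
    rw [show B p = (-(Ebar Pb p * (cos (φb p) / sin (φb p))) + k3b p) * (Ebar Pb p)⁻¹ * sin (φb p)
      from by rw [hB']]
    have s0 := hs0 p hp
    have c0 := hc0 p hp
    have e0 := he0 p
    have pyth := sin_sq_add_cos_sq (φb p)
    field_simp
    linear_combination (-(Ebar Pb p ^ 2 * sin (φb p) * fderiv ℝ φb p (0, 1))) * pyth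
  -- now the main computation
  intro q hq
  -- step 2, x-direction
  have hstep2x : qx (fun q' => qx B q' / A q') q
      = qx (qx φb) q
        - ((qx (qx (Ebar Pb)) q * Ebar Pb q - qx (Ebar Pb) q * qx (Ebar Pb) q) / Ebar Pb q ^ 2
              * (sin (φb q) / cos (φb q))
            + qx (Ebar Pb) q / Ebar Pb q * (qx φb q / cos (φb q) ^ 2)) := by
    have heq : (fun q' => qx B q' / A q') =ᶠ[nhds q]
        (fun q' => qx φb q' - qx (Ebar Pb) q' / Ebar Pb q' * (sin (φb q') / cos (φb q'))) :=
      Filter.eventuallyEq_of_mem (hVopen.mem_nhds hq) hBx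
    simp only [qx] at heq ⊢
    rw [heq.fderiv_eq]
    have dg1 : DifferentiableAt ℝ (fun p => fderiv ℝ φb p (1, 0)) q :=
      diffAt_pd hVopen hφb hq (1, 0)
    have dg2 : DifferentiableAt ℝ (fun p => fderiv ℝ (Ebar Pb) p (1, 0)) q :=
      diffAt_pd hVopen hE hq (1, 0)
    have ddiv : DifferentiableAt ℝ (fun p => fderiv ℝ (Ebar Pb) p (1, 0) / Ebar Pb p) q :=
      diffAt_div dg2 (dE q hq) (he0 q)
    have dcos : DifferentiableAt ℝ (fun r => cos (φb r)) q := (dφ q hq).cos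
    have dsin : DifferentiableAt ℝ (fun r => sin (φb r)) q := (dφ q hq).sin
    have dsc : DifferentiableAt ℝ (fun r => sin (φb r) / cos (φb r)) q :=
      diffAt_div dsin dcos (hc0 q hq)
    rw [fdv_sub dg1 (ddiv.fun_mul dsc), fdv_mul ddiv dsc, fdv_div dg2 (dE q hq) (he0 q),
      hq_sc (1, 0) q hq]
    rfl
  -- step 2, y-direction
  have hstep2y : qy (fun q' => qy A q' / B q') q
      = -(qy (qy φb) q)
        - ((qy (qy (Ebar Pb)) q * Ebar Pb q - qy (Ebar Pb) q * qy (Ebar Pb) q) / Ebar Pb q ^ 2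
              * (cos (φb q) / sin (φb q))
            + qy (Ebar Pb) q / Ebar Pb q * (-(qy φb q) / sin (φb q) ^ 2)) := by
    have heq : (fun q' => qy A q' / B q') =ᶠ[nhds q]
        (fun q' => -(qy φb q') - qy (Ebar Pb) q' / Ebar Pb q' * (cos (φb q') / sin (φb q'))) :=
      Filter.eventuallyEq_of_mem (hVopen.mem_nhds hq) hAy
    simp only [qy] at heq ⊢
    rw [heq.fderiv_eq]
    have dg1 : DifferentiableAt ℝ (fun p => fderiv ℝ φb p (0, 1)) q :=
      diffAt_pd hVopen hφb hq (0, 1)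
    have dg2 : DifferentiableAt ℝ (fun p => fderiv ℝ (Ebar Pb) p (0, 1)) q :=
      diffAt_pd hVopen hE hq (0, 1)
    have ddiv : DifferentiableAt ℝ (fun p => fderiv ℝ (Ebar Pb) p (0, 1) / Ebar Pb p) q :=
      diffAt_div dg2 (dE q hq) (he0 q)
    have dcos : DifferentiableAt ℝ (fun r => cos (φb r)) q := (dφ q hq).cos
    have dsin : DifferentiableAt ℝ (fun r => sin (φb r)) q := (dφ q hq).sin
    have dcs : DifferentiableAt ℝ (fun r => cos (φb r) / sin (φb r)) q :=
      diffAt_div dcos dsin (hs0 q hq)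
    rw [fdv_sub dg1.fun_neg (ddiv.fun_mul dcs), fdv_neg, fdv_mul ddiv dcs,
      fdv_div dg2 (dE q hq) (he0 q), hq_cs (0, 1) q hq]
    rfl
  -- assemble
  have hAB : A q * B q
      = k1b q * k2b q * ((Ebar Pb q)⁻¹ * (Ebar Pb q)⁻¹) * (sin (φb q) * cos (φb q)) := by
    simp only [hA, hB, hexpP]
    ring
  have hk10 : k1b q ≠ 0 := (mul_ne_zero_iff.mp (hk12 q hq)).1
  have hk20 : k2b q ≠ 0 := (mul_ne_zero_iff.mp (hk12 q hq)).2
  rw [hK]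
  simp only [hstep2x, hstep2y, hAB]
  have s0 := hs0 q hq
  have c0 := hc0 q hq
  have e0 := he0 q
  field_simp
  ring
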